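/- Every '+−' Motzkin path reduces to the empty word under the signature rewriting system. -/

import Mathlib

/-- The three-letter alphabet `{+, −, ±}` of signatures. -/
inductive Letter
  | plus
  | minus
  | pm
  deriving DecidableEq

/-- Value of a letter: `v(+) = 1`, `v(−) = −1`, `v(±) = 0`. -/
def Letter.val : Letter → ℤ
  | .plus => 1
  | .minus => -1
  | .pm => 0

/-- The sum of values of a word. -/
def wordVal (w : List Letter) : ℤ := (w.map Letter.val).sum

/-- A word is a '+−' Motzkin path: it begins with `+`, ends with `−`, has total
value `0`, and all of its proper nonempty initial segments have strictly positive
value sum. -/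
def IsMotzkinWord (p : List Letter) : Prop :=
  p.head? = some Letter.plus ∧ p.getLast? = some Letter.minus ∧
    wordVal p = 0 ∧ ∀ k, 0 < k → k < p.length → 0 < wordVal (p.take k)

/-- One application of a signature reduction rule to a contiguous subword:
'+−' ↦ ε, '+±−' ↦ ε, '+±' ↦ '+', '±−' ↦ '−'. -/
inductive Step : List Letter → List Letter → Prop
  | plus_minus (x y : List Letter) :
      Step (x ++ [Letter.plus, Letter.minus] ++ y) (x ++ y)
  | plus_pm_minus (x y : List Letter) :
      Step (x ++ [Letter.plus, Letter.pm, Letter.minus] ++ y) (x ++ y)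
  | plus_pm (x y : List Letter) :
      Step (x ++ [Letter.plus, Letter.pm] ++ y) (x ++ [Letter.plus] ++ y)
  | pm_minus (x y : List Letter) :
      Step (x ++ [Letter.pm, Letter.minus] ++ y) (x ++ [Letter.minus] ++ y)

/-! A path starting with `+` and ending with `−` contains a factor `+c` with `c ∈ {−, ±}`.
Deleting a factor of value `0` that is neither a prefix nor a suffix keeps a word a
Motzkin path, since every remaining prefix has the value of a proper prefix of the
original. Unless the path is `+−` itself, the rule `+− ↦ ε` (resp. `+± ↦ +`) applied to
that factor deletes such a zero-value factor, so induction on length finishes. -/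

@[simp]
lemma wordVal_append (a b : List Letter) : wordVal (a ++ b) = wordVal a + wordVal b := by
  simp [wordVal]

lemma List.exists_append_pair_of_head_ne_getLast {α : Type*} {l : List α} {a b : α}
    (hhead : l.head? = some a) (hlast : l.getLast? = some b) (hab : b ≠ a) :
    ∃ u c y, c ≠ a ∧ l = u ++ [a, c] ++ y := by
  induction l with
  | nil => simp at hhead
  | cons x t ih =>
    obtain rfl : x = a := by simpa using hhead
    cases t with
    | nil => exact absurd (by simpa using hlast.symm) hab
    | cons c t =>
      by_cases hc : c = x
      · subst hc
        obtain ⟨u, d, y, hd, ht⟩ := ih rfl (by simpa using hlast)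
        exact ⟨c :: u, d, y, hd, by simp [ht]⟩
      · exact ⟨[], c, t, hc, rfl⟩

namespace IsMotzkinWord

lemma wordVal_pos {p a b : List Letter} (h : IsMotzkinWord p) (hp : p = a ++ b)
    (ha : a ≠ []) (hb : b ≠ []) : 0 < wordVal a := by
  subst hp
  simpa using h.2.2.2 a.length (List.length_pos_iff.mpr ha)
    (by simpa using List.length_pos_iff.mpr hb)

lemma of_forall_append {p : List Letter} (hhead : p.head? = some Letter.plus)
    (hlast : p.getLast? = some Letter.minus) (hval : wordVal p = 0)
    (hpos : ∀ a b, p = a ++ b → a ≠ [] → b ≠ [] → 0 < wordVal a) : IsMotzkinWord p :=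
  ⟨hhead, hlast, hval, fun k hk hkp =>
    hpos _ _ (List.take_append_drop k p).symm (List.ne_nil_of_length_pos (by simp; omega))
      (by simpa using hkp)⟩

lemma erase_middle {u m y : List Letter} (h : IsMotzkinWord (u ++ m ++ y))
    (hm : wordVal m = 0) (hu : u ≠ []) (hy : y ≠ []) : IsMotzkinWord (u ++ y) := by
  refine of_forall_append ?_ ?_ ?_ fun a b hab ha hb => ?_
  · simpa [List.head?_append_of_ne_nil _ hu] using h.1
  · simpa [List.getLast?_append_of_ne_nil _ hy, hy] using h.2.1
  · have hval := h.2.2.1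
    simp only [wordVal_append] at hval ⊢
    omega
  · rcases List.append_eq_append_iff.mp hab with ⟨c, rfl, rfl⟩ | ⟨c, rfl, rfl⟩
    · have := h.wordVal_pos (a := u ++ m ++ c) (b := b) (by simp) (by simp [hu]) hb
      simp only [wordVal_append] at this ⊢
      omega
    · exact h.wordVal_pos (b := c ++ m ++ y) (by simp) ha (by simp [hy])

lemma exists_step {p : List Letter} (h : IsMotzkinWord p)
    (hp : p ≠ [Letter.plus, Letter.minus]) :
    ∃ q, Step p q ∧ IsMotzkinWord q ∧ q.length < p.length := by
  obtain ⟨u, c, y, hc, rfl⟩ :=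
    List.exists_append_pair_of_head_ne_getLast h.1 h.2.1 (by decide)
  cases c with
  | plus => contradiction
  | minus =>
    have hu : u ≠ [] := by
      rintro rfl
      have hy : y ≠ [] := by rintro rfl; exact hp rfl
      simpa [wordVal, Letter.val] using h.wordVal_pos rfl (by simp) hy
    have hy : y ≠ [] := by
      rintro rfl
      have hval := h.2.2.1
      have hpos := h.wordVal_pos (b := [Letter.plus, Letter.minus]) (by simp) hu (by simp)
      simp [wordVal, Letter.val] at hval hpos
      omega
    exact ⟨u ++ y, .plus_minus u y, h.erase_middle (by decide) hu hy, by simp⟩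
  | pm =>
    have hy : y ≠ [] := by rintro rfl; simpa using h.2.1
    refine ⟨u ++ [Letter.plus] ++ y, .plus_pm u y, ?_, by simp⟩
    exact erase_middle (m := [Letter.pm]) (by simpa using h) (by decide) (by simp) hy

end IsMotzkinWord

/-- Every '+−' Motzkin path reduces to the empty word under the signature
rewriting system. -/
theorem motzkin_reduces_to_empty (p : List Letter) (h : IsMotzkinWord p) :
    Relation.ReflTransGen Step p [] := by
  induction hn : p.length using Nat.strong_induction_on generalizing p with
  | _ n ih =>
    by_cases hp : p = [Letter.plus, Letter.minus]
    · subst hp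
      exact .single (by simpa using Step.plus_minus [] [])
    · obtain ⟨q, hpq, hq, hlt⟩ := h.exists_step hp
      exact .head hpq (ih q.length (hn ▸ hlt) q hq rfl)
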